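/- The mutual-visibility number of a digraph D with at least one vertex equals the maximum of the mutual-visibility numbers of its strongly connected components (each component considered as an induced subdigraph). -/

import Mathlib

variable {V : Type*}

/-- `l` is a directed walk from `u` to `v` in the digraph with arc relation `A`. -/
def IsWalk (A : V → V → Prop) (u v : V) (l : List V) : Prop :=
  l.head? = some u ∧ l.getLast? = some v ∧ l.Chain' A

/-- A directed path: a walk with pairwise distinct vertices. -/
def IsDipath (A : V → V → Prop) (u v : V) (l : List V) : Prop :=
  IsWalk A u v l ∧ l.Nodup

/-- The internal vertices of a walk given by its vertex list. -/
def internal (l : List V) : List V := l.tail.dropLast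

/-- Directed distance: the least number of arcs of a directed walk from `u` to `v`,
`⊤` if there is none. -/
noncomputable def ddist (A : V → V → Prop) (u v : V) : ℕ∞ :=
  sInf {n : ℕ∞ | ∃ l : List V, IsWalk A u v l ∧ (l.length : ℕ∞) = n + 1}

/-- `y` is visible from `x` with respect to `S`: some shortest directed `x,y`-walk
has no internal vertex in `S`. -/
def Visible (A : V → V → Prop) (S : Set V) (x y : V) : Prop :=
  ∃ l : List V, IsWalk A x y l ∧ (l.length : ℕ∞) = ddist A x y + 1 ∧
    ∀ w ∈ internal l, w ∉ S

/-- `S` is a mutual-visibility set of the digraph with arc relation `A`. -/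
def MutVisSet (A : V → V → Prop) (S : Set V) : Prop :=
  ∀ x ∈ S, ∀ y ∈ S, x ≠ y → Visible A S x y ∧ Visible A S y x

/-- The mutual-visibility number. -/
noncomputable def mu (A : V → V → Prop) : ℕ :=
  sSup {n : ℕ | ∃ S : Set V, MutVisSet A S ∧ S.ncard = n}

/-- Reachability by a directed path. -/
def Reach (A : V → V → Prop) : V → V → Prop := Relation.ReflTransGen A

/-- A digraph is strongly connected if every vertex reaches every other. -/
def StrongConn (A : V → V → Prop) : Prop := ∀ u v : V, Reach A u v

/-- The strongly connected component containing `v`. -/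
def scc (A : V → V → Prop) (v : V) : Set V := {u | Reach A u v ∧ Reach A v u}

/-- The mutual-visibility number of the subdigraph induced on `C`. -/
noncomputable def muInduced (A : V → V → Prop) (C : Set V) : ℕ :=
  sSup {n : ℕ | ∃ S : Set V, S ⊆ C ∧
    MutVisSet (fun x y => x ∈ C ∧ y ∈ C ∧ A x y) S ∧ S.ncard = n}

/-! A nonempty mutual-visibility set lies inside a single strongly connected component, since
visibility in both directions forces mutual reachability. A strongly connected component `C`
contains every walk between two of its vertices, so walks, distances and visibility between
vertices of `C` are the same in `D` and in `D[C]` (here `induce A C`); hence the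
mutual-visibility sets of `D` inside `C` are exactly those of `D[C]`. -/

variable {A : V → V → Prop}

def induce (A : V → V → Prop) (C : Set V) : V → V → Prop := fun x y => x ∈ C ∧ y ∈ C ∧ A x y

def WalkClosed (A : V → V → Prop) (C : Set V) : Prop :=
  ∀ ⦃x y : V⦄ ⦃l : List V⦄, x ∈ C → y ∈ C → IsWalk A x y l → ∀ w ∈ l, w ∈ C

section Walks

variable {u v w : V} {l : List V}

theorem IsWalk.reach_of_mem (h : IsWalk A u v l) (hw : w ∈ l) : Reach A u w ∧ Reach A w v := by
  obtain ⟨hu, hv, hl : l.IsChain A⟩ := h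
  refine ⟨hl.induction (Reach A u) l (fun _ _ hxy h => h.tail hxy) ?_ w hw,
    hl.backwards_induction (Reach A · v) l (fun _ _ hxy h => h.head hxy) ?_ w hw⟩
  · intro hne
    rw [List.head?_eq_some_head hne, Option.some_inj] at hu
    exact hu ▸ .refl
  · intro hne
    rw [List.getLast?_eq_some_getLast hne, Option.some_inj] at hv
    exact hv ▸ .refl

theorem IsWalk.reach (h : IsWalk A u v l) : Reach A u v :=
  (h.reach_of_mem (List.mem_of_mem_head? h.1)).2

theorem Visible.reach {S : Set V} (h : Visible A S u v) : Reach A u v :=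
  h.elim fun _ hl => hl.1.reach

theorem walkClosed_scc (v : V) : WalkClosed A (scc A v) := by
  intro x y l hx hy hl w hw
  obtain ⟨hxw, hwy⟩ := hl.reach_of_mem hw
  exact ⟨hwy.trans hy.1, hx.2.trans hxw⟩

theorem MutVisSet.subset_scc {S : Set V} (hS : MutVisSet A S) (hv : v ∈ S) : S ⊆ scc A v := by
  intro u hu
  obtain rfl | huv := eq_or_ne u v
  · exact ⟨.refl, .refl⟩
  · obtain ⟨huv, hvu⟩ := hS u hu v hv huv
    exact ⟨huv.reach, hvu.reach⟩

end Walks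

section Induce

variable {C : Set V} {x y : V}

theorem isWalk_induce_iff {l : List V} (hC : WalkClosed A C) (hx : x ∈ C) (hy : y ∈ C) :
    IsWalk (induce A C) x y l ↔ IsWalk A x y l := by
  refine ⟨fun ⟨hu, hv, hl⟩ => ⟨hu, hv, hl.imp fun _ _ h => h.2.2⟩, fun h => ?_⟩
  obtain ⟨hu, hv, hl⟩ := h
  have hmem := hC hx hy ⟨hu, hv, hl⟩
  refine ⟨hu, hv, (List.IsChain.iff_of_mem_imp fun a b ha hb => ?_).1 hl⟩
  simp only [induce, hmem a ha, hmem b hb, true_and]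

theorem ddist_induce (hC : WalkClosed A C) (hx : x ∈ C) (hy : y ∈ C) :
    ddist (induce A C) x y = ddist A x y := by
  simp only [ddist, isWalk_induce_iff hC hx hy]

theorem visible_induce_iff {S : Set V} (hC : WalkClosed A C) (hx : x ∈ C) (hy : y ∈ C) :
    Visible (induce A C) S x y ↔ Visible A S x y := by
  simp only [Visible, isWalk_induce_iff hC hx hy, ddist_induce hC hx hy]

theorem mutVisSet_induce_iff {S : Set V} (hC : WalkClosed A C) (hSC : S ⊆ C) :
    MutVisSet (induce A C) S ↔ MutVisSet A S := by
  refine forall₂_congr fun x hx => forall₂_congr fun y hy => imp_congr_right fun _ => ?_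
  rw [visible_induce_iff hC (hSC hx) (hSC hy), visible_induce_iff hC (hSC hy) (hSC hx)]

end Induce

section Finite

variable [Finite V] {S C : Set V}

theorem ncard_le_mu (hS : MutVisSet A S) : S.ncard ≤ mu A := by
  refine le_csSup ⟨Nat.card V, ?_⟩ ⟨S, hS, rfl⟩
  rintro _ ⟨T, -, rfl⟩
  exact T.ncard_le_card

theorem ncard_le_muInduced (hSC : S ⊆ C) (hS : MutVisSet (induce A C) S) :
    S.ncard ≤ muInduced A C := by
  refine le_csSup ⟨Nat.card V, ?_⟩ ⟨S, hSC, hS, rfl⟩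
  rintro _ ⟨T, -, -, rfl⟩
  exact T.ncard_le_card

theorem exists_mutVisSet_ncard_eq_mu (A : V → V → Prop) :
    ∃ S, MutVisSet A S ∧ S.ncard = mu A := by
  refine Nat.sSup_mem (s := {n | ∃ S : Set V, MutVisSet A S ∧ S.ncard = n})
    ⟨0, ∅, fun _ h => h.elim, Set.ncard_empty V⟩ ⟨Nat.card V, ?_⟩
  rintro _ ⟨T, -, rfl⟩
  exact T.ncard_le_card

theorem muInduced_le_mu (hC : WalkClosed A C) : muInduced A C ≤ mu A := by
  refine csSup_le' ?_
  rintro _ ⟨S, hSC, hS, rfl⟩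
  exact ncard_le_mu ((mutVisSet_induce_iff hC hSC).1 hS)

end Finite

theorem stmt6_general [Fintype V] (A : V → V → Prop) :
    mu A = ⨆ v : V, muInduced A (scc A v) := by
  refine le_antisymm ?_ (ciSup_le' fun v => muInduced_le_mu (walkClosed_scc v))
  obtain ⟨S, hS, hcard⟩ := exists_mutVisSet_ncard_eq_mu A
  rcases S.eq_empty_or_nonempty with rfl | ⟨x, hx⟩
  · simp [← hcard]
  have hSx := hS.subset_scc hx
  calc mu A = S.ncard := hcard.symm
    _ ≤ muInduced A (scc A x) :=
      ncard_le_muInduced hSx ((mutVisSet_induce_iff (walkClosed_scc x) hSx).2 hS)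
    _ ≤ ⨆ v, muInduced A (scc A v) :=
      le_ciSup (f := fun v => muInduced A (scc A v)) (Finite.bddAbove_range _) x

/-- μ(D) is the maximum of the mutual-visibility numbers of the
strongly connected components of D, as induced subdigraphs. -/
theorem stmt6 [Fintype V] [Nonempty V] (A : V → V → Prop) :
    mu A = ⨆ v : V, muInduced A (scc A v) :=
  stmt6_general A
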